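/- Let G be a finite simple connected graph and let v be a real eigenvector of the normalized modularity matrix 𝓜 corresponding to a positive eigenvalue μ. Let S = { i : v_i ≥ 0 } and let θ be the acute angle between |v| = (|v₁|,…,|vₙ|)ᵀ and δ = (√d₁,…,√dₙ)ᵀ, so cos θ = (Σ_{i∈V} √d_i |v_i|)/(‖v‖₂‖δ‖₂). If μ > tan²θ, then Q(S) > 0. -/

import Mathlib

/-!
Write `s = (±√dᵢ)ᵢ` for the vector carrying the sign pattern of `S`. Then `sᵀ𝓜s = 4 Q(S)`,
`‖s‖² = vol V` and `⟨s, v⟩ = Σᵢ √dᵢ |vᵢ|`. The matrix `𝓜 + I` is positive semidefinite (because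
`I + D^{-1/2} A D^{-1/2} = D^{-1/2} (D + A) D^{-1/2}` is, with `δ` as an eigenvector for `2`) and has
`v` as an eigenvector for `μ + 1`, so the Cauchy–Schwarz inequality for its quadratic form gives
`(μ + 1) ⟨s, v⟩² ≤ (sᵀ𝓜s + ‖s‖²) ‖v‖²`, that is `4 Q(S) ≥ vol V · ((μ + 1) cos² θ - 1)`,
and the right-hand side is positive exactly when `μ > tan² θ`.
-/

open Matrix Finset

namespace Finset

variable {ι : Type*} [DecidableEq ι]

def signVec (S : Finset ι) (i : ι) : ℝ := if i ∈ S then 1 else -1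

theorem sum_signVec_mul [Fintype ι] (S : Finset ι) (f : ι → ℝ) :
    ∑ i, S.signVec i * f i = ∑ i ∈ S, f i - ∑ i ∈ Sᶜ, f i := by
  rw [← sum_add_sum_compl S, sub_eq_add_neg, ← sum_neg_distrib]
  congr 1 <;> refine sum_congr rfl fun i hi => ?_
  · simp [signVec, hi]
  · simp [signVec, mem_compl.1 hi]

end Finset

namespace Matrix

variable {ι : Type*} [Fintype ι]

theorem PosSemidef.mul_dotProduct_sq_le {B : Matrix ι ι ℝ} (hB : B.PosSemidef) {v : ι → ℝ}
    {c : ℝ} (hv : B *ᵥ v = c • v) (s : ι → ℝ) :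
    c * (s ⬝ᵥ v) ^ 2 ≤ (s ⬝ᵥ B *ᵥ s) * (v ⬝ᵥ v) := by
  rcases (dotProduct_self_star_nonneg v).eq_or_lt with hvv | hvv
  · simp [(dotProduct_self_eq_zero.1 hvv.symm : v = 0)]
  rw [star_trivial] at hvv
  have hsym : v ⬝ᵥ B *ᵥ s = s ⬝ᵥ B *ᵥ v := by
    rw [dotProduct_mulVec, ← mulVec_transpose, dotProduct_comm,
      (isHermitian_iff_isSymm.1 hB.1).eq]
  have key := hB.dotProduct_mulVec_nonneg ((v ⬝ᵥ v) • s - (s ⬝ᵥ v) • v)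
  simp only [star_trivial, mulVec_sub, mulVec_smul, sub_dotProduct, dotProduct_sub,
    smul_dotProduct, dotProduct_smul, hsym, hv, smul_eq_mul] at key
  have : 0 ≤ (v ⬝ᵥ v) * ((s ⬝ᵥ B *ᵥ s) * (v ⬝ᵥ v) - c * (s ⬝ᵥ v) ^ 2) := by linarith
  linarith [(mul_nonneg_iff_of_pos_left hvv).1 this]

def deg (A : Matrix ι ι ℝ) (i : ι) : ℝ := ∑ j, A i j

noncomputable def sqrtDeg (A : Matrix ι ι ℝ) (i : ι) : ℝ := √(deg A i)

noncomputable def normalizedAdjacency [DecidableEq ι] (A : Matrix ι ι ℝ) : Matrix ι ι ℝ :=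
  diagonal (sqrtDeg A)⁻¹ * A * diagonal (sqrtDeg A)⁻¹

noncomputable def normalizedModularity [DecidableEq ι] (A : Matrix ι ι ℝ) : Matrix ι ι ℝ :=
  normalizedAdjacency A - (1 / ∑ i, deg A i) • vecMulVec (sqrtDeg A) (sqrtDeg A)

noncomputable def modularity (A : Matrix ι ι ℝ) (S : Finset ι) : ℝ :=
  (∑ i ∈ S, ∑ j ∈ S, A i j) - (∑ i ∈ S, deg A i) ^ 2 / ∑ i, deg A i

variable {A : Matrix ι ι ℝ}

theorem IsSymm.deg_eq_sum_col (hA : A.IsSymm) (j : ι) : deg A j = ∑ i, A i j := by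
  simp only [deg, ← hA.apply j]

-- `xᵀ (A + D) x = ½ Σᵢⱼ Aᵢⱼ (xᵢ + xⱼ)²`
theorem posSemidef_add_diagonal_deg [DecidableEq ι] (hA : A.IsSymm) (hA0 : ∀ i j, 0 ≤ A i j) :
    (A + diagonal (deg A)).PosSemidef := by
  refine .of_dotProduct_mulVec_nonneg (isHermitian_iff_isSymm.2 (hA.add (isSymm_diagonal _)))
    fun x => ?_
  have hcol : ∑ i, ∑ j, A i j * x j ^ 2 = ∑ i, deg A i * x i ^ 2 := by
    rw [sum_comm]; simp only [← sum_mul, ← hA.deg_eq_sum_col]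
  have hrow : ∑ i, ∑ j, A i j * x i ^ 2 = ∑ i, deg A i * x i ^ 2 := by
    simp only [← sum_mul, deg]
  have hform : star x ⬝ᵥ (A + diagonal (deg A)) *ᵥ x
      = ∑ i, ∑ j, A i j * (x i * x j) + ∑ i, deg A i * x i ^ 2 := by
    simp only [star_trivial, add_mulVec, dotProduct_add]
    congr 1
    · simp only [dotProduct, mulVec, mul_sum]
      exact sum_congr rfl fun i _ => sum_congr rfl fun j _ => by ring
    · simp only [dotProduct, mulVec_diagonal]
      exact sum_congr rfl fun i _ => by ring
  have hsq : ∑ i, ∑ j, A i j * (x i + x j) ^ 2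
      = ∑ i, ∑ j, A i j * x i ^ 2 + 2 * ∑ i, ∑ j, A i j * (x i * x j)
        + ∑ i, ∑ j, A i j * x j ^ 2 := by
    simp only [mul_sum, ← sum_add_distrib]
    exact sum_congr rfl fun i _ => sum_congr rfl fun j _ => by ring
  have := sum_nonneg fun i (_ : i ∈ univ) => sum_nonneg fun j (_ : j ∈ univ) =>
    mul_nonneg (hA0 i j) (sq_nonneg (x i + x j))
  linarith

theorem sqrtDeg_pos (hdeg : ∀ i, 0 < deg A i) (i : ι) : 0 < sqrtDeg A i :=
  Real.sqrt_pos.2 (hdeg i)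

theorem sqrtDeg_mul_self (hdeg : ∀ i, 0 < deg A i) (i : ι) :
    sqrtDeg A i * sqrtDeg A i = deg A i :=
  Real.mul_self_sqrt (hdeg i).le

theorem sum_sqrtDeg_mul_abs_pos (hdeg : ∀ i, 0 < deg A i) {v : ι → ℝ} (hv : v ≠ 0) :
    0 < ∑ i, sqrtDeg A i * |v i| := by
  obtain ⟨i, hi⟩ := Function.ne_iff.1 hv
  exact sum_pos' (fun j _ => mul_nonneg (sqrtDeg_pos hdeg j).le (abs_nonneg _))
    ⟨i, mem_univ _, mul_pos (sqrtDeg_pos hdeg i) (abs_pos.2 hi)⟩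

section DecidableEq

variable [DecidableEq ι]

theorem normalizedAdjacency_add_one (hdeg : ∀ i, 0 < deg A i) :
    normalizedAdjacency A + 1
      = diagonal (sqrtDeg A)⁻¹ * (A + diagonal (deg A)) * diagonal (sqrtDeg A)⁻¹ := by
  rw [mul_add, add_mul, diagonal_mul_diagonal, diagonal_mul_diagonal, normalizedAdjacency,
    ← diagonal_one]
  congr 2
  ext i
  have := (sqrtDeg_pos hdeg i).ne'
  simp only [Pi.inv_apply, ← sqrtDeg_mul_self hdeg i]
  field_simp

theorem posSemidef_normalizedAdjacency_add_one (hdeg : ∀ i, 0 < deg A i) (hA : A.IsSymm)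
    (hA0 : ∀ i j, 0 ≤ A i j) : (normalizedAdjacency A + 1).PosSemidef := by
  rw [normalizedAdjacency_add_one hdeg]
  simpa [diagonal_conjTranspose] using
    (posSemidef_add_diagonal_deg hA hA0).mul_mul_conjTranspose_same (diagonal (sqrtDeg A)⁻¹)

theorem normalizedAdjacency_mulVec_mul_sqrtDeg (hdeg : ∀ i, 0 < deg A i) (x : ι → ℝ) :
    normalizedAdjacency A *ᵥ (x * sqrtDeg A) = A *ᵥ x / sqrtDeg A := by
  have hinv : diagonal (sqrtDeg A)⁻¹ *ᵥ (x * sqrtDeg A) = x := by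
    ext i
    have := (sqrtDeg_pos hdeg i).ne'
    simp [mulVec_diagonal]
    field_simp
  ext i
  simp [normalizedAdjacency, ← mulVec_mulVec, hinv, mulVec_diagonal, div_eq_inv_mul]

theorem normalizedAdjacency_mulVec_sqrtDeg (hdeg : ∀ i, 0 < deg A i) :
    normalizedAdjacency A *ᵥ sqrtDeg A = sqrtDeg A := by
  have := normalizedAdjacency_mulVec_mul_sqrtDeg hdeg 1
  rw [one_mul] at this
  rw [this]
  ext i
  rw [Pi.div_apply, div_eq_iff (sqrtDeg_pos hdeg i).ne', sqrtDeg_mul_self hdeg]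
  simp [mulVec, dotProduct, deg]

theorem posSemidef_normalizedModularity_add_one (hdeg : ∀ i, 0 < deg A i) (hA : A.IsSymm)
    (hA0 : ∀ i j, 0 ≤ A i j) : (normalizedModularity A + 1).PosSemidef := by
  have hN := posSemidef_normalizedAdjacency_add_one hdeg hA hA0
  have hsplit : normalizedModularity A + 1 = (normalizedAdjacency A + 1)
      - (1 / ∑ i, deg A i) • vecMulVec (sqrtDeg A) (sqrtDeg A) := by
    rw [normalizedModularity]; abel
  have hvol : sqrtDeg A ⬝ᵥ sqrtDeg A = ∑ i, deg A i :=
    sum_congr rfl fun i _ => sqrtDeg_mul_self hdeg i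
  rw [hsplit]
  refine .of_dotProduct_mulVec_nonneg ?_ fun x => ?_
  · rw [isHermitian_iff_isSymm]
    exact (isHermitian_iff_isSymm.1 hN.1).sub (IsSymm.smul (transpose_vecMulVec _ _) _)
  -- Cauchy–Schwarz against the eigenvector `sqrtDeg A` (eigenvalue `2`) absorbs the rank-one term.
  have hCS := hN.mul_dotProduct_sq_le (v := sqrtDeg A) (c := 2)
    (by rw [add_mulVec, normalizedAdjacency_mulVec_sqrtDeg hdeg, one_mulVec, two_smul]) x
  simp only [star_trivial, sub_mulVec, smul_mulVec, vecMulVec_mulVec, dotProduct_sub,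
    dotProduct_smul, op_smul_eq_smul, smul_eq_mul, hvol] at hCS ⊢
  rw [dotProduct_comm (sqrtDeg A) x, ← sq]
  rcases (sum_nonneg fun i _ => (hdeg i).le : 0 ≤ ∑ i, deg A i).eq_or_lt with h0 | hpos
  · rw [← h0, div_zero, zero_mul, sub_zero]
    simpa using hN.dotProduct_mulVec_nonneg x
  · rw [one_div_mul_eq_div, sub_nonneg, div_le_iff₀ hpos]
    nlinarith

theorem signVec_dotProduct_sub_div_eq_four_mul_modularity (hA : A.IsSymm) (S : Finset ι)
    (hvol : ∑ i, deg A i ≠ 0) :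
    S.signVec ⬝ᵥ A *ᵥ S.signVec - (S.signVec ⬝ᵥ deg A) ^ 2 / ∑ i, deg A i
      = 4 * modularity A S := by
  rw [modularity]
  set e : Finset ι → Finset ι → ℝ := fun T U => ∑ i ∈ T, ∑ j ∈ U, A i j with he
  have hdeg : ∀ T, ∑ i ∈ T, deg A i = e T S + e T Sᶜ := fun T => by
    simp only [he, ← sum_add_distrib, deg, sum_add_sum_compl]
  have hsymm : e Sᶜ S = e S Sᶜ :=
    sum_comm.trans (sum_congr rfl fun i _ => sum_congr rfl fun j _ => hA.apply i j)
  have hrow : ∀ i, (A *ᵥ S.signVec) i = ∑ j ∈ S, A i j - ∑ j ∈ Sᶜ, A i j := fun i => by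
    simp only [mulVec, dotProduct, mul_comm (A i _), sum_signVec_mul]
  have hform : S.signVec ⬝ᵥ A *ᵥ S.signVec = e S S - e S Sᶜ - (e Sᶜ S - e Sᶜ Sᶜ) := by
    simp only [dotProduct, sum_signVec_mul, hrow, sum_sub_distrib, he]
  have hvol' : ∑ i, deg A i = e S S + e S Sᶜ + (e Sᶜ S + e Sᶜ Sᶜ) := by
    rw [← sum_add_sum_compl S, hdeg, hdeg]
  rw [hvol', hsymm] at hvol
  rw [hvol', hform, dotProduct, sum_signVec_mul, hdeg, hdeg, hsymm,
    show ∑ i ∈ S, ∑ j ∈ S, A i j = e S S from rfl]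
  field_simp
  ring

theorem signVec_mul_sqrtDeg_dotProduct_self (hdeg : ∀ i, 0 < deg A i) (S : Finset ι) :
    (S.signVec * sqrtDeg A) ⬝ᵥ (S.signVec * sqrtDeg A) = ∑ i, deg A i := by
  refine sum_congr rfl fun i _ => ?_
  have : S.signVec i * S.signVec i = 1 := by unfold Finset.signVec; split_ifs <;> norm_num
  rw [Pi.mul_apply, mul_mul_mul_comm, this, one_mul, sqrtDeg_mul_self hdeg]

theorem signVec_nonneg_mul_sqrtDeg_dotProduct (v : ι → ℝ) :
    ((univ.filter (0 ≤ v ·)).signVec * sqrtDeg A) ⬝ᵥ v = ∑ i, sqrtDeg A i * |v i| := by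
  refine sum_congr rfl fun i _ => ?_
  by_cases h : 0 ≤ v i
  · simp [Finset.signVec, h, abs_of_nonneg h]
  · simp [Finset.signVec, h, abs_of_neg (not_le.1 h)]

theorem signVec_mul_sqrtDeg_dotProduct_normalizedModularity_mulVec [Nonempty ι]
    (hdeg : ∀ i, 0 < deg A i) (hA : A.IsSymm) (S : Finset ι) :
    (S.signVec * sqrtDeg A) ⬝ᵥ normalizedModularity A *ᵥ (S.signVec * sqrtDeg A)
      = 4 * modularity A S := by
  have hquad : (S.signVec * sqrtDeg A) ⬝ᵥ (A *ᵥ S.signVec / sqrtDeg A)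
      = S.signVec ⬝ᵥ A *ᵥ S.signVec := by
    refine sum_congr rfl fun i _ => ?_
    have := (sqrtDeg_pos hdeg i).ne'
    simp only [Pi.mul_apply, Pi.div_apply]
    field_simp
  have hlin : (S.signVec * sqrtDeg A) ⬝ᵥ sqrtDeg A = S.signVec ⬝ᵥ deg A := by
    refine sum_congr rfl fun i _ => ?_
    rw [Pi.mul_apply, mul_assoc, sqrtDeg_mul_self hdeg]
  have hvol : 0 < ∑ i, deg A i := sum_pos (fun i _ => hdeg i) univ_nonempty
  rw [normalizedModularity, sub_mulVec, dotProduct_sub,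
    normalizedAdjacency_mulVec_mul_sqrtDeg hdeg, hquad, smul_mulVec, vecMulVec_mulVec,
    op_smul_eq_smul, dotProduct_smul, dotProduct_smul, dotProduct_comm (sqrtDeg A), hlin,
    smul_eq_mul, smul_eq_mul, ← sq, one_div_mul_eq_div]
  exact signVec_dotProduct_sub_div_eq_four_mul_modularity hA S hvol.ne'

end DecidableEq

end Matrix

theorem SimpleGraph.deg_adjMatrix {V : Type*} [Fintype V] (G : SimpleGraph V)
    [DecidableRel G.Adj] (i : V) : deg (G.adjMatrix ℝ) i = G.degree i := by
  have := G.adjMatrix_mulVec_const_apply (α := ℝ) (a := 1) (v := i)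
  rw [mul_one] at this
  rw [← this]
  simp [deg, mulVec, dotProduct]

theorem SimpleGraph.adjMatrix_nonneg {V : Type*} (G : SimpleGraph V) [DecidableRel G.Adj]
    (i j : V) : 0 ≤ G.adjMatrix ℝ i j := by
  rw [adjMatrix_apply]; split_ifs <;> norm_num

theorem SimpleGraph.Preconnected.deg_adjMatrix_pos {V : Type*} [Fintype V] [Nontrivial V]
    {G : SimpleGraph V} [DecidableRel G.Adj] (hG : G.Preconnected) (i : V) :
    0 < deg (G.adjMatrix ℝ) i := by
  rw [G.deg_adjMatrix]; exact_mod_cast hG.degree_pos_of_nontrivial i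

theorem Real.lt_mul_sq_of_tan_arccos_sq_lt {τ a b μ : ℝ} (hτ : 0 < τ) (ha : 0 < a) (hb : 0 < b)
    (h : tan (arccos (τ / (√a * √b))) ^ 2 < μ) : a * b < (μ + 1) * τ ^ 2 := by
  have hc : (τ / (√a * √b)) ^ 2 = τ ^ 2 / (a * b) := by
    rw [div_pow, mul_pow, sq_sqrt ha.le, sq_sqrt hb.le]
  rw [tan_arccos, div_pow, sq_sqrt', hc, div_lt_iff₀ (by positivity)] at h
  have : 1 < (μ + 1) * (τ ^ 2 / (a * b)) := by linarith [(le_max_left _ _).trans_lt h]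
  rwa [mul_div_assoc', one_lt_div (by positivity)] at this

theorem nodal_domain_positive_modularity_tangent_condition_general
    {n : ℕ} (G : SimpleGraph (Fin n)) [DecidableRel G.Adj]
    (hconn : G.Connected)
    (A : Matrix (Fin n) (Fin n) ℝ) (hA : A = G.adjMatrix ℝ)
    (d : Fin n → ℝ) (hd : d = fun i => ∑ j, A i j)
    (vol : ℝ) (hvol : vol = ∑ i, d i)
    (δ : Fin n → ℝ) (hδ : δ = fun i => Real.sqrt (d i))
    (NM : Matrix (Fin n) (Fin n) ℝ)
    (hNM : NM = diagonal (fun i => (Real.sqrt (d i))⁻¹) * A *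
                diagonal (fun i => (Real.sqrt (d i))⁻¹) - (1 / vol) • vecMulVec δ δ)
    (μ : ℝ) (hμpos : 0 < μ)
    (v : Fin n → ℝ) (hv : v ≠ 0) (hvev : NM.mulVec v = μ • v)
    (S : Finset (Fin n)) (hS : S = univ.filter (fun i => 0 ≤ v i))
    (θ : ℝ)
    (hθ : θ = Real.arccos ((∑ i, Real.sqrt (d i) * |v i|) /
      (Real.sqrt (∑ i, v i ^ 2) * Real.sqrt (∑ i, d i))))
    (Q : Finset (Fin n) → ℝ)
    (hQ : ∀ T, Q T = (∑ i ∈ T, ∑ j ∈ T, A i j) - (∑ i ∈ T, d i) ^ 2 / vol)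
    (hμ : Real.tan θ ^ 2 < μ) :
    0 < Q S := by
  subst hd hvol hδ hS
  change NM = normalizedModularity A at hNM
  change θ = Real.arccos ((∑ i, sqrtDeg A i * |v i|) /
      (√(∑ i, v i ^ 2) * √(∑ i, deg A i))) at hθ
  change ∀ T, Q T = modularity A T at hQ
  subst hNM hθ hA
  rcases subsingleton_or_nontrivial (Fin n) with hsub | hnt
  · have hA0 : G.adjMatrix ℝ = 0 := by ext i j; simp [Subsingleton.elim i j]
    have : μ • v = 0 := by
      rw [← hvev, hA0]
      simp [normalizedModularity, normalizedAdjacency, deg]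
    exact absurd this (smul_ne_zero hμpos.ne' hv)
  have hdeg := hconn.preconnected.deg_adjMatrix_pos
  have hsymm := G.isSymm_adjMatrix (α := ℝ)
  have hrayleigh := (posSemidef_normalizedModularity_add_one hdeg hsymm
    G.adjMatrix_nonneg).mul_dotProduct_sq_le
    (c := μ + 1) (by rw [add_mulVec, hvev, one_mulVec, add_smul, one_smul])
    ((univ.filter (0 ≤ v ·)).signVec * sqrtDeg (G.adjMatrix ℝ))
  rw [add_mulVec, one_mulVec, dotProduct_add,
    signVec_mul_sqrtDeg_dotProduct_normalizedModularity_mulVec hdeg hsymm,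
    signVec_mul_sqrtDeg_dotProduct_self hdeg, signVec_nonneg_mul_sqrtDeg_dotProduct] at hrayleigh
  rw [show ∑ i, v i ^ 2 = v ⬝ᵥ v from sum_congr rfl fun i _ => sq (v i)] at hμ
  have hvv : 0 < v ⬝ᵥ v := by simpa using dotProduct_self_star_pos_iff.2 hv
  have htan := Real.lt_mul_sq_of_tan_arccos_sq_lt (sum_sqrtDeg_mul_abs_pos hdeg hv) hvv
    (sum_pos (fun i _ => hdeg i) univ_nonempty) hμ
  rw [hQ]
  nlinarith

/-- Let `v` be a real eigenvector of the normalized modularity matrix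
`𝓜` for a positive eigenvalue `μ`, `S = {i : v_i ≥ 0}`, and let `θ` be the acute angle
between `|v|` and `δ`, i.e. `cos θ = (Σ_i √d_i |v_i|)/(‖v‖₂‖δ‖₂)`. If `μ > tan²θ`,
then `Q(S) > 0`. -/
theorem nodal_domain_positive_modularity_tangent_condition
    {n : ℕ} (hn : 0 < n) (G : SimpleGraph (Fin n)) [DecidableRel G.Adj]
    (hconn : G.Connected)
    (A : Matrix (Fin n) (Fin n) ℝ) (hA : A = G.adjMatrix ℝ)
    (d : Fin n → ℝ) (hd : d = fun i => ∑ j, A i j)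
    (vol : ℝ) (hvol : vol = ∑ i, d i)
    (δ : Fin n → ℝ) (hδ : δ = fun i => Real.sqrt (d i))
    (NM : Matrix (Fin n) (Fin n) ℝ)
    (hNM : NM = diagonal (fun i => (Real.sqrt (d i))⁻¹) * A *
                diagonal (fun i => (Real.sqrt (d i))⁻¹) - (1 / vol) • vecMulVec δ δ)
    (μ : ℝ) (hμpos : 0 < μ)
    (v : Fin n → ℝ) (hv : v ≠ 0) (hvev : NM.mulVec v = μ • v)
    (S : Finset (Fin n)) (hS : S = univ.filter (fun i => 0 ≤ v i))
    (θ : ℝ)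
    (hθ : θ = Real.arccos ((∑ i, Real.sqrt (d i) * |v i|) /
      (Real.sqrt (∑ i, v i ^ 2) * Real.sqrt (∑ i, d i))))
    (Q : Finset (Fin n) → ℝ)
    (hQ : ∀ T, Q T = (∑ i ∈ T, ∑ j ∈ T, A i j) - (∑ i ∈ T, d i) ^ 2 / vol)
    (hμ : Real.tan θ ^ 2 < μ) :
    0 < Q S :=
  nodal_domain_positive_modularity_tangent_condition_general G hconn A hA d hd vol hvol δ hδ NM hNM
    μ hμpos v hv hvev S hS θ hθ Q hQ hμ
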